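/- arXiv:1910.07245 — 2 statements merged into one kernel-verified Lean document; each statement's English description precedes it below -/
import Mathlib

section
/- (Coifman–Rochberg) There is a dimensional constant C_n such that for every measurable set E ⊂ ℝⁿ with 0 < |E| < ∞ and every λ ∈ (0,1), the function f = log⁺((1/λ) Mχ_E) belongs to BMO(ℝⁿ) with ‖f‖_{BMO} ≤ C_n, where the constant is independent of E and λ. -/
open MeasureTheory Metric Set
open scoped ENNReal

/-- The uncentered Hardy–Littlewood maximal operator over cubes (= closed balls in the
sup metric on `ℝⁿ = Fin n → ℝ`), acting on `ℝ≥0∞`-valued functions. -/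
noncomputable def maximal {n : ℕ} (f : (Fin n → ℝ) → ℝ≥0∞) (x : Fin n → ℝ) : ℝ≥0∞ :=
  ⨆ (c : Fin n → ℝ) (r : ℝ) (_ : 0 < r) (_ : x ∈ closedBall c r),
    (volume (closedBall c r))⁻¹ * ∫⁻ y in closedBall c r, f y

/-- `Mχ_E`, the maximal function of the indicator of a set `E`. -/
noncomputable def maximalInd {n : ℕ} (E : Set (Fin n → ℝ)) (x : Fin n → ℝ) : ℝ≥0∞ :=
  maximal (E.indicator 1) x

/-!
Fix a cube `Q = closedBall c r` and split `E = E₁ ∪ E₂` with `E₁ = E ∩ 2Q`, `E₂ = E \ 2Q`.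
On `Q`, `Mχ_E` is at least the density `β = |E₁|/|2Q|`, and `Mχ_{E₂}` varies by at most the
factor `5ⁿ`. Hence on `Q`, `log Mχ_E` stays within `log (2·5ⁿ) + log⁺ (Mχ_{E₁}/β)` of the
constant `log (max β (Mχ_{E₂} c))`. Summing the weak type (1,1) bound for `Mχ_{E₁}` over the
levels `2ᵏβ` bounds the integral of the last term by `2·10ⁿ|Q|`. Finally, the mean oscillation
over `Q` is at most twice the mean deviation from any constant.
-/

open Real Filter Topology

lemma exists_one_lt_ofReal_pow_mul_lt {a b : ℝ≥0∞} (hab : a < b) (n : ℕ) :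
    ∃ t : ℝ, 1 < t ∧ ENNReal.ofReal (t ^ n) * a < b := by
  have hpow : Tendsto (fun t : ℝ => ENNReal.ofReal (t ^ n)) (𝓝 1) (𝓝 1) := by
    simpa using ENNReal.tendsto_ofReal ((continuous_pow n).tendsto' 1 1 (one_pow n))
  have hlim : Tendsto (fun t : ℝ => ENNReal.ofReal (t ^ n) * a) (𝓝[>] 1) (𝓝 a) := by
    simpa using ENNReal.Tendsto.mul_const (hpow.mono_left nhdsWithin_le_nhds) (Or.inl one_ne_zero)
  obtain ⟨t, hta, ht⟩ := ((hlim.eventually_lt_const hab).and self_mem_nhdsWithin).exists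
  exact ⟨t, ht, hta⟩

section Maximal

variable {n : ℕ}

lemma volume_closedBall_mul (c : Fin n → ℝ) {k r : ℝ} (hk : 0 ≤ k) (hr : 0 ≤ r) :
    volume (closedBall c (k * r)) = ENNReal.ofReal (k ^ n) * volume (closedBall c r) := by
  rw [Measure.addHaar_closedBall_mul volume c hk hr, Measure.addHaar_closedBall_center volume c r,
    Module.finrank_fin_fun]

lemma le_maximal (f : (Fin n → ℝ) → ℝ≥0∞) {x c : Fin n → ℝ} {r : ℝ} (hr : 0 < r)
    (hx : x ∈ closedBall c r) :
    (volume (closedBall c r))⁻¹ * ∫⁻ y in closedBall c r, f y ≤ maximal f x :=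
  le_iSup₂_of_le c r <| le_iSup₂_of_le (α := ℝ≥0∞) hr hx le_rfl

lemma maximal_le {f : (Fin n → ℝ) → ℝ≥0∞} {x : Fin n → ℝ} {a : ℝ≥0∞}
    (h : ∀ c r, 0 < r → x ∈ closedBall c r →
      (volume (closedBall c r))⁻¹ * ∫⁻ y in closedBall c r, f y ≤ a) :
    maximal f x ≤ a :=
  iSup₂_le fun c r => iSup₂_le fun hr hx => h c r hr hx

lemma lt_maximal_iff {f : (Fin n → ℝ) → ℝ≥0∞} {x : Fin n → ℝ} {a : ℝ≥0∞} :
    a < maximal f x ↔ ∃ c r, 0 < r ∧ x ∈ closedBall c r ∧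
      a < (volume (closedBall c r))⁻¹ * ∫⁻ y in closedBall c r, f y := by
  simp only [maximal, lt_iSup_iff, exists_prop]

lemma maximal_mono {f g : (Fin n → ℝ) → ℝ≥0∞} (hfg : f ≤ g) (x : Fin n → ℝ) :
    maximal f x ≤ maximal g x :=
  maximal_le fun _ _ hr hx => le_trans (by gcongr; exact hfg _) (le_maximal g hr hx)

lemma maximal_add_le {f : (Fin n → ℝ) → ℝ≥0∞} (hf : Measurable f) (g : (Fin n → ℝ) → ℝ≥0∞)
    (x : Fin n → ℝ) : maximal (f + g) x ≤ maximal f x + maximal g x :=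
  maximal_le fun c r hr hx => by
    rw [Pi.add_def, lintegral_add_left hf, mul_add]
    exact add_le_add (le_maximal f hr hx) (le_maximal g hr hx)

/-- A ball witnessing `a < maximal f x` can be slightly enlarged so that it still witnesses
`a < maximal f x'` for all `x'` near `x`. -/
lemma lowerSemicontinuous_maximal (f : (Fin n → ℝ) → ℝ≥0∞) :
    LowerSemicontinuous (maximal f) := by
  intro x a ha
  obtain ⟨c, r, hr, hx, ha⟩ := lt_maximal_iff.1 ha
  obtain ⟨t, ht, hta⟩ := exists_one_lt_ofReal_pow_mul_lt ha n
  have hrt : r < t * r := lt_mul_left hr ht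
  filter_upwards [ball_mem_nhds x (sub_pos.2 hrt)] with x' hx'
  have hx'c : x' ∈ closedBall c (t * r) := by
    rw [mem_closedBall] at hx ⊢
    rw [mem_ball] at hx'
    linarith [dist_triangle x' x c]
  have hτ : ENNReal.ofReal (t ^ n) ≠ 0 := (ENNReal.ofReal_pos.2 (by positivity)).ne'
  refine lt_of_lt_of_le ?_ (le_maximal f (hr.trans hrt) hx'c)
  rw [volume_closedBall_mul c (by linarith) hr.le,
    ENNReal.mul_inv (Or.inl hτ) (Or.inl ENNReal.ofReal_ne_top), mul_assoc, mul_comm,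
    ← div_eq_mul_inv]
  calc a < (volume (closedBall c r))⁻¹ * (∫⁻ y in closedBall c r, f y) / ENNReal.ofReal (t ^ n) :=
        (ENNReal.lt_div_iff_mul_lt (Or.inl hτ) (Or.inl ENNReal.ofReal_ne_top)).2
          (by rwa [mul_comm])
    _ ≤ _ := by gcongr

lemma measurable_maximal (f : (Fin n → ℝ) → ℝ≥0∞) : Measurable (maximal f) :=
  (lowerSemicontinuous_maximal f).measurable

/-- A ball through `x` that meets the support of `f` has radius greater than `r₀ / 2`, so its
fivefold enlargement contains `y`. -/
lemma maximal_le_five_pow_mul_maximal {f : (Fin n → ℝ) → ℝ≥0∞} {c₀ x y : Fin n → ℝ} {r₀ : ℝ}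
    (hf : EqOn f 0 (closedBall c₀ (2 * r₀))) (hx : x ∈ closedBall c₀ r₀)
    (hy : y ∈ closedBall c₀ r₀) :
    maximal f x ≤ ENNReal.ofReal (5 ^ n) * maximal f y := by
  refine maximal_le fun c s hs hxc => ?_
  by_cases hsub : closedBall c s ⊆ closedBall c₀ (2 * r₀)
  · rw [setLIntegral_eq_zero measurableSet_closedBall (hf.mono hsub), mul_zero]
    exact zero_le
  obtain ⟨z, hzc, hz⟩ := not_subset.1 hsub
  simp only [mem_closedBall] at hx hy hxc hzc hz
  have hy5 : y ∈ closedBall c (5 * s) := by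
    rw [mem_closedBall]
    linarith [dist_triangle4 z c x c₀, dist_triangle4 y c₀ x c, dist_comm c x, dist_comm c₀ x]
  have h5 : ENNReal.ofReal (5 ^ n) ≠ 0 := (ENNReal.ofReal_pos.2 (by positivity)).ne'
  calc (volume (closedBall c s))⁻¹ * ∫⁻ y in closedBall c s, f y
      = ENNReal.ofReal (5 ^ n) * ((volume (closedBall c (5 * s)))⁻¹ *
          ∫⁻ y in closedBall c s, f y) := by
        rw [volume_closedBall_mul c (by norm_num) hs.le,
          ENNReal.mul_inv (Or.inl h5) (Or.inl ENNReal.ofReal_ne_top), ← mul_assoc, ← mul_assoc,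
          ENNReal.mul_inv_cancel h5 ENNReal.ofReal_ne_top, one_mul]
    _ ≤ ENNReal.ofReal (5 ^ n) * ((volume (closedBall c (5 * s)))⁻¹ *
          ∫⁻ y in closedBall c (5 * s), f y) := by
        gcongr
        linarith
    _ ≤ ENNReal.ofReal (5 ^ n) * maximal f y := by
        gcongr
        exact le_maximal f (by positivity) hy5

lemma radius_le_of_volume_closedBall_le (hn : n ≠ 0) {c : Fin n → ℝ} {r : ℝ} (hr : 0 ≤ r)
    {W : ℝ≥0∞} (hW : W ≠ ∞) (hV : volume (closedBall c r) ≤ W) : r ≤ 1 + W.toReal := by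
  rw [Real.volume_pi_closedBall c hr, Fintype.card_fin,
    ENNReal.ofReal_le_iff_le_toReal hW] at hV
  rcases le_total (2 * r) 1 with h | h
  · linarith [ENNReal.toReal_nonneg (a := W)]
  · linarith [le_self_pow₀ h hn]

lemma volume_lt_maximal_le (hn : n ≠ 0) {f : (Fin n → ℝ) → ℝ≥0∞} (hf : ∫⁻ y, f y ≠ ∞)
    {t : ℝ≥0∞} (ht0 : t ≠ 0) (ht : t ≠ ∞) :
    volume {x | t < maximal f x} ≤ ENNReal.ofReal (5 ^ n) * (∫⁻ y, f y) / t := by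
  set T := {p : (Fin n → ℝ) × ℝ |
    0 < p.2 ∧ t * volume (closedBall p.1 p.2) < ∫⁻ y in closedBall p.1 p.2, f y}
  have hvol : ∀ p ∈ T, volume (closedBall p.1 p.2) ≤ (∫⁻ y in closedBall p.1 p.2, f y) / t :=
    fun p hp => (ENNReal.le_div_iff_mul_le (Or.inl ht0) (Or.inl ht)).2 <| by
      rw [mul_comm]
      exact hp.2.le
  have hcover : {x | t < maximal f x} ⊆ ⋃ p ∈ T, closedBall p.1 p.2 := by
    intro x hx
    obtain ⟨c, r, hr, hxc, hlt⟩ := lt_maximal_iff.1 hx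
    rw [← ENNReal.div_eq_inv_mul, ENNReal.lt_div_iff_mul_lt (Or.inl
      (measure_closedBall_pos volume c hr).ne') (Or.inl measure_closedBall_lt_top.ne)] at hlt
    exact mem_biUnion (x := (c, r)) ⟨hr, hlt⟩ hxc
  have hrad : ∀ p ∈ T, p.2 ≤ 1 + ((∫⁻ y, f y) / t).toReal := fun p hp =>
    radius_le_of_volume_closedBall_le hn hp.1.le (ENNReal.div_ne_top hf ht0)
      ((hvol p hp).trans (by gcongr; exact Measure.restrict_le_self))
  obtain ⟨u, huT, hdisj, henl⟩ :=
    Vitali.exists_disjoint_subfamily_covering_enlargement_closedBall T Prod.fst Prod.snd _ hrad 5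
      (by norm_num)
  have hu : u.Countable := hdisj.countable_of_nonempty_interior fun p hp =>
    (nonempty_ball.2 (huT hp).1).mono ball_subset_interior_closedBall
  have := hu.to_subtype
  calc volume {x | t < maximal f x}
      ≤ volume (⋃ p ∈ u, closedBall p.1 (5 * p.2)) := by
        refine measure_mono (hcover.trans (iUnion₂_subset fun p hp => ?_))
        obtain ⟨q, hq, hpq⟩ := henl p hp
        exact hpq.trans (subset_biUnion_of_mem (u := fun q => closedBall q.1 (5 * q.2)) hq)
    _ ≤ ∑' p : u, volume (closedBall p.1.1 (5 * p.1.2)) := measure_biUnion_le _ hu _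
    _ ≤ ∑' p : u, ENNReal.ofReal (5 ^ n) * (∫⁻ y in closedBall p.1.1 p.1.2, f y) / t := by
        refine ENNReal.tsum_le_tsum fun p => ?_
        rw [volume_closedBall_mul _ (by norm_num) (huT p.2).1.le, mul_div_assoc]
        exact mul_le_mul_right (hvol p (huT p.2)) _
    _ = ENNReal.ofReal (5 ^ n) * (∫⁻ y in ⋃ p : u, closedBall p.1.1 p.1.2, f y) / t := by
        rw [lintegral_iUnion (fun _ => measurableSet_closedBall) hdisj.subtype]
        simp only [div_eq_mul_inv, ENNReal.tsum_mul_right, ENNReal.tsum_mul_left]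
    _ ≤ ENNReal.ofReal (5 ^ n) * (∫⁻ y, f y) / t := by
        gcongr
        exact Measure.restrict_le_self

end Maximal

section MaximalInd

variable {n : ℕ}

lemma maximalInd_le_one (E : Set (Fin n → ℝ)) (x : Fin n → ℝ) : maximalInd E x ≤ 1 :=
  maximal_le fun c r hr _ => by
    calc (volume (closedBall c r))⁻¹ * ∫⁻ y in closedBall c r, E.indicator 1 y
        ≤ (volume (closedBall c r))⁻¹ * volume (closedBall c r) := by
          gcongr
          exact (lintegral_indicator_one_le E).trans (measure_mono (subset_univ E) |>.trans_eq
            (Measure.restrict_apply_univ _))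
      _ = 1 := ENNReal.inv_mul_cancel (measure_closedBall_pos volume c hr).ne'
          measure_closedBall_lt_top.ne

lemma maximalInd_ne_top (E : Set (Fin n → ℝ)) (x : Fin n → ℝ) : maximalInd E x ≠ ∞ :=
  ((maximalInd_le_one E x).trans_lt ENNReal.one_lt_top).ne

lemma maximalInd_of_volume_eq_zero {E : Set (Fin n → ℝ)} (hE : volume E = 0) (x : Fin n → ℝ) :
    maximalInd E x = 0 :=
  nonpos_iff_eq_zero.1 <| maximal_le fun c r _ _ => by
    rw [nonpos_iff_eq_zero, nonpos_iff_eq_zero.1 ((lintegral_indicator_one_le E).trans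
      (Measure.restrict_apply_le _ E |>.trans hE.le)), mul_zero]

lemma volume_inter_div_le_maximalInd {E : Set (Fin n → ℝ)} (hE : MeasurableSet E)
    {x c : Fin n → ℝ} {r : ℝ} (hr : 0 < r) (hx : x ∈ closedBall c r) :
    volume (E ∩ closedBall c r) / volume (closedBall c r) ≤ maximalInd E x := by
  rw [ENNReal.div_eq_inv_mul, ← Measure.restrict_apply hE, ← lintegral_indicator_one hE]
  exact le_maximal _ hr hx

lemma volume_inter_div_ne_top (E : Set (Fin n → ℝ)) (c : Fin n → ℝ) {r : ℝ} (hr : 0 < r) :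
    volume (E ∩ closedBall c r) / volume (closedBall c r) ≠ ∞ :=
  ENNReal.div_ne_top (measure_ne_top_of_subset inter_subset_right measure_closedBall_lt_top.ne)
    (measure_closedBall_pos volume c hr).ne'

lemma maximalInd_pos {E : Set (Fin n → ℝ)} (hE : MeasurableSet E) (hE0 : 0 < volume E)
    (x : Fin n → ℝ) : 0 < maximalInd E x := by
  obtain ⟨k, hk⟩ : ∃ k : ℕ, volume (E ∩ closedBall x (k + 1)) ≠ 0 := by
    by_contra! h
    refine hE0.ne' (measure_mono_null ?_ (measure_iUnion_null h))
    rw [← inter_iUnion]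
    refine fun z hz => ⟨hz, mem_iUnion.2 ⟨⌈dist z x⌉₊, ?_⟩⟩
    rw [mem_closedBall]
    linarith [Nat.le_ceil (dist z x)]
  exact (ENNReal.div_pos hk measure_closedBall_lt_top.ne).trans_le
    (volume_inter_div_le_maximalInd hE (by positivity) (mem_closedBall_self (by positivity)))

lemma maximalInd_le_inter_add_diff {E s : Set (Fin n → ℝ)} (hE : MeasurableSet E)
    (hs : MeasurableSet s) (x : Fin n → ℝ) :
    maximalInd E x ≤ maximalInd (E ∩ s) x + maximalInd (E \ s) x := by
  have hsplit : E.indicator (1 : (Fin n → ℝ) → ℝ≥0∞) =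
      (E ∩ s).indicator 1 + (E \ s).indicator 1 := by
    conv_lhs => rw [← inter_union_sdiff E s]
    exact indicator_union_of_disjoint disjoint_sdiff_inter.symm _
  unfold maximalInd
  rw [hsplit]
  exact maximal_add_le (measurable_one.indicator (hE.inter hs)) _ x

lemma maximalInd_diff_le_five_pow_mul (E : Set (Fin n → ℝ)) {c x y : Fin n → ℝ} {r : ℝ}
    (hx : x ∈ closedBall c r) (hy : y ∈ closedBall c r) :
    maximalInd (E \ closedBall c (2 * r)) x ≤
      ENNReal.ofReal (5 ^ n) * maximalInd (E \ closedBall c (2 * r)) y :=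
  maximal_le_five_pow_mul_maximal (fun _ hz => indicator_of_notMem (fun h => h.2 hz) _) hx hy

lemma volume_lt_maximalInd_le (hn : n ≠ 0) {F : Set (Fin n → ℝ)} (hF : MeasurableSet F)
    (hFfin : volume F ≠ ∞) {t : ℝ≥0∞} (ht0 : t ≠ 0) (ht : t ≠ ∞) :
    volume {x | t < maximalInd F x} ≤ ENNReal.ofReal (5 ^ n) * volume F / t := by
  have hint : ∫⁻ y, F.indicator 1 y = volume F := lintegral_indicator_one hF
  rw [← hint] at hFfin ⊢
  exact volume_lt_maximal_le hn hFfin ht0 ht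

lemma maximalInd_mono {E F : Set (Fin n → ℝ)} (h : E ⊆ F) (x : Fin n → ℝ) :
    maximalInd E x ≤ maximalInd F x :=
  maximal_mono (indicator_le_indicator_of_subset h fun _ => zero_le) x

end MaximalInd

lemma ofReal_posLog_le_tsum {x : ℝ} (hx : 0 ≤ x) :
    ENNReal.ofReal (log⁺ x) ≤ ∑' k : ℕ, if (2 : ℝ) ^ k < x then (1 : ℝ≥0∞) else 0 := by
  have hlevel : ∀ k ∈ Finset.range ⌈log⁺ x⌉₊, (2 : ℝ) ^ k < x := fun k hk => by
    have hk : (k : ℝ) < log x := by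
      have := Nat.lt_ceil.1 (Finset.mem_range.1 hk)
      rw [posLog_apply, lt_max_iff] at this
      exact this.resolve_left (not_lt.2 k.cast_nonneg)
    have hx0 : 0 < x := lt_of_le_of_ne hx fun h => by simp [← h] at hk; linarith
    calc (2 : ℝ) ^ k ≤ exp k := by
          rw [← exp_one_pow]
          gcongr
          exact (lt_trans (by norm_num) exp_one_gt_d9).le
      _ < x := (lt_log_iff_exp_lt hx0).1 hk
  calc ENNReal.ofReal (log⁺ x) ≤ ⌈log⁺ x⌉₊ := by
        rw [← ENNReal.ofReal_natCast]
        exact ENNReal.ofReal_le_ofReal (Nat.le_ceil _)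
    _ = ∑ k ∈ Finset.range ⌈log⁺ x⌉₊, if (2 : ℝ) ^ k < x then (1 : ℝ≥0∞) else 0 := by
        rw [Finset.sum_congr rfl fun k hk => if_pos (hlevel k hk)]
        simp
    _ ≤ _ := ENNReal.sum_le_tsum _

lemma abs_log_sub_log_le {a b K : ℝ} (ha : 0 < a) (hb : 0 < b) (hab : a ≤ K * b)
    (hba : b ≤ K * a) : |log a - log b| ≤ log K := by
  have hK : 0 < K := pos_of_mul_pos_left (ha.trans_le hab) hb.le
  rw [abs_sub_le_iff]
  constructor
  · linarith [log_le_log ha hab, log_mul hK.ne' hb.ne']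
  · linarith [log_le_log hb hba, log_mul hK.ne' ha.ne']

/-- Used with `P = 5ⁿ`, `v = Mχ_E(y)`, `u = Mχ_{E₁}(y)`, `A = Mχ_{E₂}(c)`, `β = |E₁|/|2Q|`. -/
lemma abs_log_sub_log_max_le {P v u β A : ℝ} (hP : 1 ≤ P) (hβv : β ≤ v) (hAv : A ≤ P * v)
    (hvu : v ≤ u + P * A) (hm : 0 < max β A) (hu : 0 ≤ u) (hβu : 0 < β ∨ u = 0) :
    |log v - log (max β A)| ≤ log (2 * P) + log⁺ (u / β) := by
  set m := max β A
  have hv : 0 < v := by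
    rcases lt_max_iff.1 hm with h | h
    · linarith
    · nlinarith
  have hmv : m ≤ P * v := max_le (hβv.trans (le_mul_of_one_le_left hv.le hP)) hAv
  have hPA : P * A ≤ P * m := mul_le_mul_of_nonneg_left (le_max_right β A) (by linarith)
  have hvm : v ≤ 2 * P * max 1 (u / β) * m := by
    rcases le_or_gt u (P * m) with h | h
    · calc v ≤ 2 * P * 1 * m := by linarith
        _ ≤ 2 * P * max 1 (u / β) * m := by gcongr; exact le_max_left _ _
    · have hβ : 0 < β := hβu.resolve_right (by nlinarith)
      calc v ≤ 2 * (1 * u) := by linarith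
        _ ≤ 2 * (P * (u / β * β)) := by
            rw [div_mul_cancel₀ u hβ.ne']
            gcongr
        _ = 2 * P * (u / β) * β := by ring
        _ ≤ 2 * P * max 1 (u / β) * m :=
            mul_le_mul (mul_le_mul_of_nonneg_left (le_max_right _ _) (by positivity))
              (le_max_left β A) hβ.le (by positivity)
  calc |log v - log m| ≤ log (2 * P * max 1 (u / β)) :=
        abs_log_sub_log_le hv hm hvm (hmv.trans (by
          have h2 : 0 ≤ 2 * max 1 (u / β) - 1 := by linarith [le_max_left 1 (u / β)]
          nlinarith [mul_nonneg (mul_nonneg (by linarith : (0:ℝ) ≤ P) hv.le) h2]))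
    _ = log (2 * P) + log⁺ (u / β) := by
        rw [log_mul (by positivity) (by positivity),
          posLog_eq_log_max_one (hβu.elim (fun h => div_nonneg hu h.le) fun h => by simp [h])]

lemma abs_posLog_sub_posLog_le (x y : ℝ) : |log⁺ x - log⁺ y| ≤ |log x - log y| := by
  simp only [posLog_apply]
  rw [max_comm 0, max_comm 0]
  exact abs_max_sub_max_le_abs _ _ 0

lemma setLIntegral_enorm_sub_setAverage_le {α F : Type*} [MeasurableSpace α] {μ : Measure α}
    [NormedAddCommGroup F] [NormedSpace ℝ F] [CompleteSpace F] {s : Set α} (hs : μ s ≠ ∞)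
    {f : α → F} (hf : IntegrableOn f s μ) (κ : F) :
    ∫⁻ x in s, ‖f x - ⨍ y in s, f y ∂μ‖ₑ ∂μ ≤ 2 * ∫⁻ x in s, ‖f x - κ‖ₑ ∂μ := by
  rcases eq_or_ne (μ s) 0 with hs0 | hs0
  · simp [Measure.restrict_eq_zero.2 hs0]
  have hreal : μ.real s ≠ 0 := ENNReal.toReal_ne_zero.2 ⟨hs0, hs⟩
  have hint : ∫ x in s, (κ - f x) ∂μ = μ.real s • (κ - ⨍ y in s, f y ∂μ) := by
    rw [integral_sub (integrableOn_const (C := κ) hs) hf, setIntegral_const, smul_sub,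
      setAverage_eq, smul_inv_smul₀ hreal]
  have hconst : ‖κ - ⨍ y in s, f y ∂μ‖ₑ * μ s ≤ ∫⁻ x in s, ‖f x - κ‖ₑ ∂μ :=
    calc ‖κ - ⨍ y in s, f y ∂μ‖ₑ * μ s = ‖∫ x in s, (κ - f x) ∂μ‖ₑ := by
          rw [hint, enorm_smul, Real.enorm_of_nonneg measureReal_nonneg, measureReal_def,
            ENNReal.ofReal_toReal hs, mul_comm]
      _ ≤ ∫⁻ x in s, ‖κ - f x‖ₑ ∂μ := enorm_integral_le_lintegral_enorm _
      _ = ∫⁻ x in s, ‖f x - κ‖ₑ ∂μ := by simp_rw [enorm_sub_rev]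
  calc ∫⁻ x in s, ‖f x - ⨍ y in s, f y ∂μ‖ₑ ∂μ
      ≤ ∫⁻ x in s, (‖f x - κ‖ₑ + ‖κ - ⨍ y in s, f y ∂μ‖ₑ) ∂μ := lintegral_mono fun x => by
        simpa using enorm_add_le (f x - κ) (κ - ⨍ y in s, f y ∂μ)
    _ = ∫⁻ x in s, ‖f x - κ‖ₑ ∂μ + ‖κ - ⨍ y in s, f y ∂μ‖ₑ * μ s := by
        rw [lintegral_add_right _ measurable_const, setLIntegral_const]
    _ ≤ 2 * ∫⁻ x in s, ‖f x - κ‖ₑ ∂μ := by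
        rw [two_mul]
        gcongr

lemma log_two_mul_five_pow_nonneg (n : ℕ) : 0 ≤ log (2 * 5 ^ n) :=
  log_nonneg (by linarith [one_le_pow₀ (M₀ := ℝ) (n := n) (by norm_num : (1 : ℝ) ≤ 5)])

section Oscillation

variable {n : ℕ}

lemma lintegral_posLog_maximalInd_div_le (hn : n ≠ 0) {F : Set (Fin n → ℝ)}
    (hF : MeasurableSet F) (hFfin : volume F ≠ ∞) {β : ℝ} (hβ : 0 < β) :
    ∫⁻ y, ENNReal.ofReal (log⁺ ((maximalInd F y).toReal / β)) ≤
      2 * ENNReal.ofReal (5 ^ n) * volume F / ENNReal.ofReal β := by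
  set S : ℕ → Set (Fin n → ℝ) := fun k => {y | ENNReal.ofReal (β * 2 ^ k) < maximalInd F y}
  have hS : ∀ k, MeasurableSet (S k) :=
    fun k => measurableSet_lt measurable_const (measurable_maximal _)
  have hpt : ∀ y, ENNReal.ofReal (log⁺ ((maximalInd F y).toReal / β)) ≤
      ∑' k, (S k).indicator 1 y := fun y =>
    (ofReal_posLog_le_tsum (div_nonneg ENNReal.toReal_nonneg hβ.le)).trans <|
      ENNReal.tsum_le_tsum fun k => by
        split_ifs with h
        · rw [lt_div_iff₀ hβ, mul_comm] at h
          have hy : y ∈ S k :=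
            (ENNReal.ofReal_lt_iff_lt_toReal (by positivity) (maximalInd_ne_top F y)).2 h
          rw [indicator_of_mem hy]
          rfl
        · exact zero_le
  have hlevel : ∀ k : ℕ, volume (S k) ≤
      ENNReal.ofReal (5 ^ n) * volume F / ENNReal.ofReal β * 2⁻¹ ^ k := by
    intro k
    calc volume (S k) ≤ ENNReal.ofReal (5 ^ n) * volume F / ENNReal.ofReal (β * 2 ^ k) :=
          volume_lt_maximalInd_le hn hF hFfin (ENNReal.ofReal_pos.2 (by positivity)).ne'
            ENNReal.ofReal_ne_top
      _ = ENNReal.ofReal (5 ^ n) * volume F / ENNReal.ofReal β * 2⁻¹ ^ k := by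
          rw [ENNReal.ofReal_mul hβ.le, ENNReal.ofReal_pow zero_le_two, ENNReal.ofReal_ofNat,
            div_eq_mul_inv, div_eq_mul_inv, ENNReal.mul_inv (Or.inr (by simp)) (Or.inl (by simp)),
            ENNReal.inv_pow]
          ring
  calc ∫⁻ y, ENNReal.ofReal (log⁺ ((maximalInd F y).toReal / β))
      ≤ ∫⁻ y, ∑' k, (S k).indicator 1 y := lintegral_mono hpt
    _ = ∑' k, volume (S k) := by
        rw [lintegral_tsum fun k => (measurable_one.indicator (hS k)).aemeasurable]
        simp only [lintegral_indicator_one (hS _)]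
    _ ≤ ∑' k : ℕ, ENNReal.ofReal (5 ^ n) * volume F / ENNReal.ofReal β * 2⁻¹ ^ k :=
        ENNReal.tsum_le_tsum hlevel
    _ = 2 * ENNReal.ofReal (5 ^ n) * volume F / ENNReal.ofReal β := by
        rw [ENNReal.tsum_mul_left, ENNReal.tsum_geometric, ENNReal.one_sub_inv_two, inv_inv,
          div_eq_mul_inv, div_eq_mul_inv]
        ring

lemma abs_log_maximalInd_sub_log_le {E F G : Set (Fin n → ℝ)} (hE : MeasurableSet E)
    {c y : Fin n → ℝ} {r : ℝ} (hr : 0 < r) (hy : y ∈ closedBall c r)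
    (hF : F = E ∩ closedBall c (2 * r)) (hG : G = E \ closedBall c (2 * r)) {β : ℝ}
    (hβ : β = (volume F / volume (closedBall c (2 * r))).toReal)
    (hm : 0 < max β (maximalInd G c).toReal) :
    |log (maximalInd E y).toReal - log (max β (maximalInd G c).toReal)| ≤
      log (2 * 5 ^ n) + log⁺ ((maximalInd F y).toReal / β) := by
  subst hF hG hβ
  have hc : c ∈ closedBall c r := mem_closedBall_self hr.le
  refine abs_log_sub_log_max_le (one_le_pow₀ (by norm_num)) ?_ ?_ ?_ hm ENNReal.toReal_nonneg ?_
  · exact ENNReal.toReal_mono (maximalInd_ne_top _ _) (volume_inter_div_le_maximalInd hE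
      (by linarith) (closedBall_subset_closedBall (by linarith) hy))
  · have h := (maximalInd_diff_le_five_pow_mul E hc hy).trans
      (mul_le_mul_right (maximalInd_mono sdiff_subset y) _)
    rwa [← ENNReal.toReal_le_toReal (maximalInd_ne_top _ _)
      (ENNReal.mul_ne_top ENNReal.ofReal_ne_top (maximalInd_ne_top _ _)), ENNReal.toReal_mul,
      ENNReal.toReal_ofReal (by positivity)] at h
  · have h := (maximalInd_le_inter_add_diff hE measurableSet_closedBall y).trans
      (add_le_add_right (maximalInd_diff_le_five_pow_mul E hy hc) _)
    rwa [← ENNReal.toReal_le_toReal (maximalInd_ne_top _ _) (ENNReal.add_ne_top.2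
      ⟨maximalInd_ne_top _ _, ENNReal.mul_ne_top ENNReal.ofReal_ne_top (maximalInd_ne_top _ _)⟩),
      ENNReal.toReal_add (maximalInd_ne_top _ _)
        (ENNReal.mul_ne_top ENNReal.ofReal_ne_top (maximalInd_ne_top _ _)),
      ENNReal.toReal_mul, ENNReal.toReal_ofReal (by positivity)] at h
  · rcases eq_or_ne (volume (E ∩ closedBall c (2 * r))) 0 with h0 | h0
    · right
      simp [maximalInd_of_volume_eq_zero h0]
    · left
      exact ENNReal.toReal_pos (ENNReal.div_pos h0 measure_closedBall_lt_top.ne).ne'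
        (volume_inter_div_ne_top E c (by linarith))

lemma setLIntegral_posLog_maximalInd_inter_le (hn : n ≠ 0) {E : Set (Fin n → ℝ)}
    (hE : MeasurableSet E) (c : Fin n → ℝ) {r : ℝ} (hr : 0 < r) :
    ∫⁻ y in closedBall c r, ENNReal.ofReal (log⁺ ((maximalInd (E ∩ closedBall c (2 * r)) y).toReal /
        (volume (E ∩ closedBall c (2 * r)) / volume (closedBall c (2 * r))).toReal)) ≤
      ENNReal.ofReal (2 * 10 ^ n) * volume (closedBall c r) := by
  set F := E ∩ closedBall c (2 * r)
  have hQ2 : volume (closedBall c (2 * r)) ≠ ∞ := measure_closedBall_lt_top.ne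
  have hFfin : volume F ≠ ∞ := measure_ne_top_of_subset inter_subset_right hQ2
  rcases eq_or_ne (volume F) 0 with h0 | h0
  · simp [h0]
  have hb := volume_inter_div_ne_top E c (r := 2 * r) (by linarith)
  calc _ ≤ ∫⁻ y, ENNReal.ofReal (log⁺ ((maximalInd F y).toReal /
          (volume F / volume (closedBall c (2 * r))).toReal)) := setLIntegral_le_lintegral _ _
    _ ≤ 2 * ENNReal.ofReal (5 ^ n) * volume F /
          ENNReal.ofReal (volume F / volume (closedBall c (2 * r))).toReal :=
        lintegral_posLog_maximalInd_div_le hn (hE.inter measurableSet_closedBall) hFfin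
          (ENNReal.toReal_pos (ENNReal.div_pos h0 hQ2).ne' hb)
    _ = 2 * ENNReal.ofReal (5 ^ n) * volume (closedBall c (2 * r)) := by
        rw [ENNReal.ofReal_toReal hb, mul_div_assoc, ENNReal.div_div_cancel h0 hFfin]
    _ = ENNReal.ofReal (2 * 10 ^ n) * volume (closedBall c r) := by
        rw [volume_closedBall_mul c zero_le_two hr.le,
          show (10 : ℝ) ^ n = 5 ^ n * 2 ^ n by rw [← mul_pow]; norm_num,
          ENNReal.ofReal_mul zero_le_two, ENNReal.ofReal_mul (by positivity), ENNReal.ofReal_ofNat]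
        ring

lemma exists_setLIntegral_enorm_posLog_maximalInd_sub_le (hn : n ≠ 0) {E : Set (Fin n → ℝ)}
    (hE : MeasurableSet E) (hE0 : 0 < volume E) {l : ℝ} (hl : 0 < l) (c : Fin n → ℝ) {r : ℝ}
    (hr : 0 < r) :
    ∃ κ : ℝ, ∫⁻ y in closedBall c r, ‖log⁺ ((maximalInd E y).toReal / l) - κ‖ₑ ≤
      ENNReal.ofReal (log (2 * 5 ^ n) + 2 * 10 ^ n) * volume (closedBall c r) := by
  set F := E ∩ closedBall c (2 * r) with hF
  set G := E \ closedBall c (2 * r) with hG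
  set β := (volume F / volume (closedBall c (2 * r))).toReal with hβ
  set m := max β (maximalInd G c).toReal
  have hm : 0 < m := by
    rcases eq_or_ne (volume G) 0 with hG0 | hG0
    · have hF0 : volume F ≠ 0 := fun hF0 => hE0.ne' <| measure_mono_null
        (inter_union_sdiff E (closedBall c (2 * r))).ge (measure_union_null hF0 hG0)
      exact lt_max_of_lt_left (ENNReal.toReal_pos (ENNReal.div_pos hF0
        measure_closedBall_lt_top.ne).ne' (volume_inter_div_ne_top E c (by linarith)))
    · exact lt_max_of_lt_right (ENNReal.toReal_pos (maximalInd_pos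
        (hE.diff measurableSet_closedBall) (pos_iff_ne_zero.2 hG0) c).ne' (maximalInd_ne_top _ _))
  refine ⟨log⁺ (m / l), ?_⟩
  have hpt : ∀ y ∈ closedBall c r, ‖log⁺ ((maximalInd E y).toReal / l) - log⁺ (m / l)‖ₑ ≤
      ENNReal.ofReal (log (2 * 5 ^ n)) + ENNReal.ofReal (log⁺ ((maximalInd F y).toReal / β)) := by
    intro y hy
    have hv : (maximalInd E y).toReal ≠ 0 :=
      (ENNReal.toReal_pos (maximalInd_pos hE hE0 y).ne' (maximalInd_ne_top _ _)).ne'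
    rw [Real.enorm_eq_ofReal_abs,
      ← ENNReal.ofReal_add (log_two_mul_five_pow_nonneg n) posLog_nonneg]
    refine ENNReal.ofReal_le_ofReal ((abs_posLog_sub_posLog_le _ _).trans ?_)
    rw [log_div hv hl.ne', log_div hm.ne' hl.ne', sub_sub_sub_cancel_right]
    exact abs_log_maximalInd_sub_log_le hE hr hy hF hG hβ hm
  calc _ ≤ ∫⁻ y in closedBall c r, (ENNReal.ofReal (log (2 * 5 ^ n)) +
          ENNReal.ofReal (log⁺ ((maximalInd F y).toReal / β))) :=
        setLIntegral_mono' measurableSet_closedBall hpt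
    _ = ENNReal.ofReal (log (2 * 5 ^ n)) * volume (closedBall c r) +
          ∫⁻ y in closedBall c r, ENNReal.ofReal (log⁺ ((maximalInd F y).toReal / β)) := by
        rw [lintegral_add_left measurable_const, setLIntegral_const]
    _ ≤ ENNReal.ofReal (log (2 * 5 ^ n)) * volume (closedBall c r) +
          ENNReal.ofReal (2 * 10 ^ n) * volume (closedBall c r) := by
        gcongr
        exact setLIntegral_posLog_maximalInd_inter_le hn hE c hr
    _ = _ := by rw [ENNReal.ofReal_add (log_two_mul_five_pow_nonneg n) (by positivity), add_mul]

lemma integrableOn_posLog_maximalInd_div (E : Set (Fin n → ℝ)) {l : ℝ} (hl : 0 ≤ l)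
    {s : Set (Fin n → ℝ)} (hs : volume s ≠ ∞) :
    IntegrableOn (fun x => log⁺ ((maximalInd E x).toReal / l)) s := by
  refine Measure.integrableOn_of_bounded (M := log⁺ (1 / l)) hs ?_ (ae_of_all _ fun x => ?_)
  · exact (continuous_posLog.measurable.comp
      ((measurable_maximal _).ennreal_toReal.div_const l)).aestronglyMeasurable
  · rw [Real.norm_of_nonneg posLog_nonneg]
    refine posLog_le_posLog (div_nonneg ENNReal.toReal_nonneg hl) ?_
    gcongr
    exact ENNReal.toReal_le_of_le_ofReal zero_le_one (by simpa using maximalInd_le_one E x)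

end Oscillation

/-- Coifman–Rochberg: there is a dimensional constant `C_n` such that for every
measurable `E` with `0 < |E| < ∞` and every `λ ∈ (0,1)`, the function
`f = log⁺((1/λ)Mχ_E)` satisfies `‖f‖_{BMO} ≤ C_n`, i.e. for every cube `Q`,
`(1/|Q|)∫_Q |f − f_Q| ≤ C_n`. -/
theorem stmt17 (n : ℕ) :
    ∃ C : ℝ, 0 < C ∧
      ∀ E : Set (Fin n → ℝ), MeasurableSet E → 0 < volume E → volume E < ∞ →
        ∀ l : ℝ, 0 < l → l < 1 →
          ∀ (c : Fin n → ℝ) (r : ℝ), 0 < r →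
            (volume (closedBall c r))⁻¹ *
              ∫⁻ y in closedBall c r,
                (‖(fun x => max (Real.log ((maximalInd E x).toReal / l)) 0) y -
                  ⨍ z in closedBall c r,
                    max (Real.log ((maximalInd E z).toReal / l)) 0‖₊ : ℝ≥0∞) ≤
            ENNReal.ofReal C := by
  have hlog := log_two_mul_five_pow_nonneg n
  refine ⟨2 * (log (2 * 5 ^ n) + 2 * 10 ^ n), by positivity, ?_⟩
  intro E hE hE0 _ l hl _ c r hr
  set f : (Fin n → ℝ) → ℝ := fun x => log⁺ ((maximalInd E x).toReal / l)
  have hf : ∀ x, max (log ((maximalInd E x).toReal / l)) 0 = f x := fun _ => max_comm _ _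
  simp only [hf, ← enorm_eq_nnnorm]
  have hQ : volume (closedBall c r) ≠ ∞ := measure_closedBall_lt_top.ne
  obtain ⟨κ, hκ⟩ : ∃ κ : ℝ, ∫⁻ y in closedBall c r, ‖f y - κ‖ₑ ≤
      ENNReal.ofReal (log (2 * 5 ^ n) + 2 * 10 ^ n) * volume (closedBall c r) := by
    rcases eq_or_ne n 0 with rfl | hn
    · exact ⟨f c, by simp [Subsingleton.elim _ c]⟩
    · exact exists_setLIntegral_enorm_posLog_maximalInd_sub_le hn hE hE0 hl c hr
  calc (volume (closedBall c r))⁻¹ * ∫⁻ y in closedBall c r, ‖f y - ⨍ z in closedBall c r, f z‖ₑ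
      ≤ (volume (closedBall c r))⁻¹ *
          (2 * (ENNReal.ofReal (log (2 * 5 ^ n) + 2 * 10 ^ n) * volume (closedBall c r))) := by
        gcongr
        exact (setLIntegral_enorm_sub_setAverage_le hQ
          (integrableOn_posLog_maximalInd_div E hl.le hQ) κ).trans (by gcongr)
    _ = 2 * ENNReal.ofReal (log (2 * 5 ^ n) + 2 * 10 ^ n) *
          ((volume (closedBall c r))⁻¹ * volume (closedBall c r)) := by ring
    _ = ENNReal.ofReal (2 * (log (2 * 5 ^ n) + 2 * 10 ^ n)) := by
        rw [ENNReal.inv_mul_cancel (measure_closedBall_pos volume c hr).ne' hQ, mul_one,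
          ENNReal.ofReal_mul zero_le_two, ENNReal.ofReal_ofNat]
end

section
/- Let 𝒮 ⊆ 𝒟 be a finite family of dyadic cubes in a dyadic lattice, stratified as 𝒮 = ∪_{ν=0}^N 𝒮_ν where 𝒮₀ consists of the maximal cubes of 𝒮 and 𝒮_{ν+1} of the maximal cubes of 𝒮 \ ∪_{l≤ν}𝒮_l. For Q ∈ 𝒮_ν and m ∈ ℕ define A_m(Q) = ∪{Q' ∈ 𝒮_{ν+m} : Q' ⊆ Q}, and E_Q = Q \ ∪{Q' ∈ 𝒮_{ν+1} : Q' ⊆ Q}. Then the sets {E_Q}_{Q∈𝒮} are pairwise disjoint, Q \ A_m(Q) = ∪_{l=0}^{m−1} ∪{E_{Q'} : Q' ∈ 𝒮_{ν+l}, Q' ⊆ Q}, and consequently for any measure μ and any measurable set E, Σ_{Q∈𝒮} μ(E ∩ (Q \ A_m(Q))) ≤ m·μ(E). -/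
/-!
Each generation `𝒮_ν` consists of pairwise disjoint cubes, and a cube of a later generation that
meets `Q ∈ 𝒮_ν` lies inside `Q`, because `Q` is maximal among the cubes that remain. Hence the
sets `A_m(Q)` decrease in `m`, `A_m(Q) \ A_{m+1}(Q)` is the union of the `E_{Q'}` with
`Q' ∈ 𝒮_{ν+m}`, `Q' ⊆ Q`, and every cube of `𝒮` strictly inside `Q` is covered by `A_1(Q)`, which
makes the `E_Q` disjoint. In `∑_Q μ(E ∩ (Q \ A_m(Q)))` each `μ(E ∩ E_{Q'})` is then counted once
for every ancestor of `Q'` fewer than `m` generations above it; there is at most one ancestor per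
generation, so at most `m` of them.
-/

open MeasureTheory Set
open scoped ENNReal Classical

variable {α : Type*}

noncomputable def maxCubes (T : Finset (Set α)) : Finset (Set α) :=
  T.filter fun Q => ∀ Q' ∈ T, Q ⊆ Q' → Q = Q'

/-- `rem S ν`: what remains of `S` after removing the first `ν` generations. -/
noncomputable def rem (S : Finset (Set α)) : ℕ → Finset (Set α)
  | 0 => S
  | ν + 1 => rem S ν \ maxCubes (rem S ν)

/-- `strat S ν` = the `ν`-th generation `𝒮_ν`: the maximal cubes of `𝒮 \ ∪_{l<ν} 𝒮_l`. -/
noncomputable def strat (S : Finset (Set α)) (ν : ℕ) : Finset (Set α) :=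
  maxCubes (rem S ν)

noncomputable def rank (S : Finset (Set α)) (Q : Set α) : ℕ :=
  sInf {ν | Q ∈ strat S ν}

/-- `A_m(Q) = ∪{Q' ∈ 𝒮_{ν+m} : Q' ⊆ Q}` for `Q ∈ 𝒮_ν`. -/
noncomputable def layer (S : Finset (Set α)) (ν m : ℕ) (Q : Set α) : Set α :=
  ⋃ Q' ∈ (strat S (ν + m)).filter fun Q' => Q' ⊆ Q, Q'

/-- `E_Q = Q \ ∪{Q' ∈ 𝒮_{ν+1} : Q' ⊆ Q}` for `Q` in generation `ν`. -/
noncomputable def EQ (S : Finset (Set α)) (Q : Set α) : Set α :=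
  Q \ layer S (rank S Q) 1 Q

lemma maxCubes_subset (T : Finset (Set α)) : maxCubes T ⊆ T :=
  Finset.filter_subset _ _

lemma eq_of_mem_maxCubes {T : Finset (Set α)} {Q R : Set α} (hQ : Q ∈ maxCubes T) (hR : R ∈ T)
    (hQR : Q ⊆ R) : Q = R :=
  (Finset.mem_filter.mp hQ).2 R hR hQR

lemma exists_mem_maxCubes_superset {T : Finset (Set α)} {R : Set α} (hR : R ∈ T) :
    ∃ Q ∈ maxCubes T, R ⊆ Q := by
  obtain ⟨Q, hRQ, hQ⟩ := T.exists_le_maximal hR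
  exact ⟨Q, Finset.mem_filter.mpr ⟨hQ.prop, fun Q' hQ' h => h.antisymm (hQ.2 hQ' h)⟩, hRQ⟩

section Stratification

variable {S : Finset (Set α)} {Q R : Set α} {ν : ℕ}

lemma rem_succ (S : Finset (Set α)) (ν : ℕ) : rem S (ν + 1) = rem S ν \ strat S ν := rfl

lemma rem_antitone (S : Finset (Set α)) : Antitone (rem S) :=
  antitone_nat_of_succ_le fun _ => Finset.sdiff_subset

lemma rem_subset (S : Finset (Set α)) (ν : ℕ) : rem S ν ⊆ S :=
  rem_antitone S (Nat.zero_le ν)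

lemma strat_subset_rem (S : Finset (Set α)) (ν : ℕ) : strat S ν ⊆ rem S ν :=
  maxCubes_subset _

lemma strat_subset (S : Finset (Set α)) (ν : ℕ) : strat S ν ⊆ S :=
  (strat_subset_rem S ν).trans (rem_subset S ν)

lemma notMem_rem_succ_of_mem_strat (hQ : Q ∈ strat S ν) : Q ∉ rem S (ν + 1) := by
  rw [rem_succ, Finset.mem_sdiff, not_and_not_right]
  exact fun _ => hQ

lemma notMem_strat_of_lt {ν' : ℕ} (hQ : Q ∈ strat S ν) (h : ν < ν') : Q ∉ strat S ν' :=
  fun hQ' => notMem_rem_succ_of_mem_strat hQ (rem_antitone S h (strat_subset_rem S ν' hQ'))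

lemma card_rem_succ_lt (h : (rem S ν).Nonempty) : (rem S (ν + 1)).card < (rem S ν).card := by
  obtain ⟨R, hR⟩ := h
  obtain ⟨Q, hQ, -⟩ := exists_mem_maxCubes_superset hR
  exact Finset.card_lt_card (Finset.sdiff_ssubset (maxCubes_subset _) ⟨Q, hQ⟩)

lemma exists_mem_strat (hQ : Q ∈ S) : ∃ ν, Q ∈ strat S ν := by
  by_contra! hnot
  have hrem (ν : ℕ) : Q ∈ rem S ν := by
    induction ν with
    | zero => exact hQ
    | succ ν ih => exact Finset.mem_sdiff.mpr ⟨ih, hnot ν⟩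
  -- the generations are never empty, so `rem S ν` would shrink forever
  have hcard (ν : ℕ) : ν + (rem S ν).card ≤ S.card := by
    induction ν with
    | zero => simp [rem]
    | succ ν ih => have := card_rem_succ_lt ⟨Q, hrem ν⟩; omega
  have := hcard (S.card + 1)
  omega

lemma mem_strat_rank (hQ : Q ∈ S) : Q ∈ strat S (rank S Q) :=
  Nat.sInf_mem (exists_mem_strat hQ)

lemma rank_eq_of_mem_strat (hQ : Q ∈ strat S ν) : rank S Q = ν := by
  have hle : rank S Q ≤ ν := Nat.sInf_le hQ
  refine hle.eq_or_lt.resolve_right fun hlt => ?_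
  exact notMem_strat_of_lt (mem_strat_rank (strat_subset S ν hQ)) hlt hQ

end Stratification

def NestedOrDisjoint (S : Finset (Set α)) : Prop :=
  ∀ Q ∈ S, ∀ Q' ∈ S, Q ⊆ Q' ∨ Q' ⊆ Q ∨ Disjoint Q Q'

section Nested

variable {S : Finset (Set α)} {Q R : Set α} {ν m : ℕ}

lemma subset_of_mem_strat_of_mem_rem (hS : NestedOrDisjoint S) (hQ : Q ∈ strat S ν)
    (hR : R ∈ rem S ν) (hRQ : (R ∩ Q).Nonempty) : R ⊆ Q := by
  rcases hS R (rem_subset S ν hR) Q (strat_subset S ν hQ) with h | h | h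
  · exact h
  · exact (eq_of_mem_maxCubes hQ hR h).ge
  · exact absurd h (not_disjoint_iff_nonempty_inter.mpr hRQ)

lemma eq_of_rank_eq (hS : NestedOrDisjoint S) (hQ : Q ∈ S) (hR : R ∈ S)
    (hQR : (Q ∩ R).Nonempty) (hrank : rank S Q = rank S R) : Q = R := by
  have hQ' := mem_strat_rank hQ
  have hR' := mem_strat_rank hR
  rw [hrank] at hQ'
  exact (subset_of_mem_strat_of_mem_rem hS hR' (strat_subset_rem S _ hQ') hQR).antisymm
    (subset_of_mem_strat_of_mem_rem hS hQ' (strat_subset_rem S _ hR') (inter_comm Q R ▸ hQR))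

lemma mem_rem_succ_of_ssubset (hR : R ∈ S) (hQ : Q ∈ strat S ν) (hRQ : R ⊂ Q) :
    R ∈ rem S (ν + 1) := by
  suffices ∀ l ≤ ν + 1, R ∈ rem S l from this _ le_rfl
  intro l hl
  induction l with
  | zero => exact hR
  | succ l ih =>
    refine Finset.mem_sdiff.mpr ⟨ih (by omega), fun hRl => hRQ.ne ?_⟩
    exact eq_of_mem_maxCubes hRl (rem_antitone S (by omega) (strat_subset_rem S ν hQ)) hRQ.le

lemma mem_layer {x : α} :
    x ∈ layer S ν m Q ↔ ∃ Q' ∈ strat S (ν + m), Q' ⊆ Q ∧ x ∈ Q' := by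
  simp [layer, and_assoc]

lemma layer_subset : layer S ν m Q ⊆ Q := by
  intro x hx
  obtain ⟨Q', -, hQ'Q, hx⟩ := mem_layer.mp hx
  exact hQ'Q hx

lemma subset_layer_zero (hQ : Q ∈ strat S ν) : Q ⊆ layer S ν 0 Q :=
  fun _ hx => mem_layer.mpr ⟨Q, hQ, subset_rfl, hx⟩

lemma EQ_eq_of_mem_strat (hQ : Q ∈ strat S ν) : EQ S Q = Q \ layer S ν 1 Q := by
  rw [EQ, rank_eq_of_mem_strat hQ]

lemma layer_succ_subset (hS : NestedOrDisjoint S) (hQ : Q ∈ strat S ν) :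
    layer S ν (m + 1) Q ⊆ layer S ν m Q := by
  intro x hx
  obtain ⟨Q'', hQ'', hQ''Q, hxQ''⟩ := mem_layer.mp hx
  have hrem : Q'' ∈ rem S (ν + m) := rem_antitone S (by omega) (strat_subset_rem S _ hQ'')
  obtain ⟨Q', hQ', hQ''Q'⟩ := exists_mem_maxCubes_superset hrem
  have hQ'Q : Q' ⊆ Q := subset_of_mem_strat_of_mem_rem hS hQ
    (rem_antitone S (by omega) (strat_subset_rem S _ hQ')) ⟨x, hQ''Q' hxQ'', hQ''Q hxQ''⟩
  exact mem_layer.mpr ⟨Q', hQ', hQ'Q, hQ''Q' hxQ''⟩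

lemma layer_diff_layer_succ (hS : NestedOrDisjoint S) :
    layer S ν m Q \ layer S ν (m + 1) Q =
      ⋃ Q' ∈ (strat S (ν + m)).filter fun Q' => Q' ⊆ Q, EQ S Q' := by
  ext x
  simp only [mem_sdiff, mem_iUnion, Finset.mem_filter, exists_prop, mem_layer, not_exists,
    not_and]
  constructor
  · rintro ⟨⟨Q', hQ', hQ'Q, hxQ'⟩, hx⟩
    refine ⟨Q', ⟨hQ', hQ'Q⟩, ?_⟩
    rw [EQ_eq_of_mem_strat hQ', mem_sdiff, mem_layer]
    exact ⟨hxQ', fun ⟨Q'', hQ'', hQ''Q', hxQ''⟩ => hx Q'' hQ'' (hQ''Q'.trans hQ'Q) hxQ''⟩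
  · rintro ⟨Q', ⟨hQ', hQ'Q⟩, hxE⟩
    rw [EQ_eq_of_mem_strat hQ', mem_sdiff, mem_layer] at hxE
    refine ⟨⟨Q', hQ', hQ'Q, hxE.1⟩, fun Q'' hQ'' _ hxQ'' => hxE.2 ⟨Q'', hQ'', ?_, hxQ''⟩⟩
    exact subset_of_mem_strat_of_mem_rem hS hQ'
      (rem_antitone S (by omega) (strat_subset_rem S _ hQ'')) ⟨x, hxQ'', hxE.1⟩

lemma diff_layer_eq_biUnion_EQ (hS : NestedOrDisjoint S) (m : ℕ) (hQ : Q ∈ strat S ν) :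
    Q \ layer S ν m Q =
      ⋃ l ∈ Finset.range m, ⋃ Q' ∈ (strat S (ν + l)).filter fun Q' => Q' ⊆ Q, EQ S Q' := by
  induction m with
  | zero => simp [sdiff_eq_empty.mpr (subset_layer_zero hQ)]
  | succ m ih =>
    rw [← sdiff_union_sdiff_cancel layer_subset (layer_succ_subset hS hQ), ih,
      layer_diff_layer_succ hS, Finset.range_add_one, Finset.set_biUnion_insert, union_comm]

lemma subset_layer_one_of_ssubset (hS : NestedOrDisjoint S) (hR : R ∈ S) (hQ : Q ∈ strat S ν)
    (hRQ : R ⊂ Q) : R ⊆ layer S ν 1 Q := by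
  intro x hx
  obtain ⟨Q', hQ', hRQ'⟩ := exists_mem_maxCubes_superset (mem_rem_succ_of_ssubset hR hQ hRQ)
  have hQ'Q : Q' ⊆ Q := subset_of_mem_strat_of_mem_rem hS hQ
    (rem_antitone S (by omega) (strat_subset_rem S _ hQ')) ⟨x, hRQ' hx, hRQ.le hx⟩
  exact mem_layer.mpr ⟨Q', hQ', hQ'Q, hRQ' hx⟩

lemma disjoint_EQ_of_ssubset (hS : NestedOrDisjoint S) (hQ : Q ∈ S) (hR : R ∈ S) (hRQ : R ⊂ Q) :
    Disjoint (EQ S Q) (EQ S R) :=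
  disjoint_sdiff_self_left.mono_right
    (sdiff_subset.trans (subset_layer_one_of_ssubset hS hR (mem_strat_rank hQ) hRQ))

lemma pairwise_disjoint_EQ (hS : NestedOrDisjoint S) :
    (S : Set (Set α)).Pairwise fun Q R => Disjoint (EQ S Q) (EQ S R) := by
  intro Q hQ R hR hne
  rcases hS Q hQ R hR with h | h | h
  · exact (disjoint_EQ_of_ssubset hS hR hQ (h.ssubset_of_ne hne)).symm
  · exact disjoint_EQ_of_ssubset hS hQ hR (h.ssubset_of_ne hne.symm)
  · exact h.mono sdiff_subset sdiff_subset

def IsShallowDescendant (S : Finset (Set α)) (m : ℕ) (R Q : Set α) : Prop :=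
  R ⊆ Q ∧ rank S Q ≤ rank S R ∧ rank S R < rank S Q + m

lemma diff_layer_rank_subset (hS : NestedOrDisjoint S) (hQ : Q ∈ S) :
    Q \ layer S (rank S Q) m Q ⊆
      ⋃ R ∈ S.filter fun R => IsShallowDescendant S m R Q, EQ S R := by
  rw [diff_layer_eq_biUnion_EQ hS m (mem_strat_rank hQ)]
  simp only [iUnion_subset_iff, Finset.mem_range, Finset.mem_filter]
  rintro l hl R ⟨hR, hRQ⟩ x hx
  refine mem_iUnion₂.mpr ⟨R, ?_, hx⟩
  rw [IsShallowDescendant, rank_eq_of_mem_strat hR]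
  exact ⟨strat_subset S _ hR, hRQ, by omega, by omega⟩

lemma card_filter_isShallowDescendant_le (hS : NestedOrDisjoint S) (hR : R.Nonempty) (m : ℕ) :
    (S.filter fun Q => IsShallowDescendant S m R Q).card ≤ m := by
  have hmaps : Set.MapsTo (fun Q => rank S R - rank S Q)
      (S.filter fun Q => IsShallowDescendant S m R Q) (Finset.range m) := by
    intro Q hQ
    rw [Finset.mem_coe, Finset.mem_filter, IsShallowDescendant] at hQ
    rw [Finset.mem_coe, Finset.mem_range]
    dsimp only
    omega
  have hinj : Set.InjOn (fun Q => rank S R - rank S Q)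
      (S.filter fun Q => IsShallowDescendant S m R Q) := by
    intro Q₁ hQ₁ Q₂ hQ₂ heq
    rw [Finset.mem_coe, Finset.mem_filter, IsShallowDescendant] at hQ₁ hQ₂
    dsimp only at heq
    -- two ancestors of the nonempty cube `R` in the same generation meet, hence coincide
    obtain ⟨x, hx⟩ := hR
    exact eq_of_rank_eq hS hQ₁.1 hQ₂.1 ⟨x, hQ₁.2.1 hx, hQ₂.2.1 hx⟩ (by omega)
  simpa using Finset.card_le_card_of_injOn _ hmaps hinj

lemma sum_measure_inter_EQ_le [MeasurableSpace α] (hS : NestedOrDisjoint S)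
    (hmeas : ∀ Q ∈ S, MeasurableSet Q) (μ : Measure α) {E : Set α} (hE : MeasurableSet E) :
    ∑ Q ∈ S, μ (E ∩ EQ S Q) ≤ μ E := by
  have hmeasEQ : ∀ Q ∈ S, MeasurableSet (E ∩ EQ S Q) := fun Q hQ =>
    hE.inter ((hmeas Q hQ).diff (Finset.measurableSet_biUnion _ fun Q' hQ' =>
      hmeas Q' (strat_subset S _ (Finset.mem_filter.mp hQ').1)))
  rw [← measure_biUnion_finset (fun Q hQ R hR hne =>
    ((pairwise_disjoint_EQ hS) hQ hR hne).mono inter_subset_right inter_subset_right) hmeasEQ]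
  exact measure_mono (iUnion₂_subset fun _ _ => inter_subset_left)

lemma sum_measure_inter_diff_layer_le [MeasurableSpace α] (hS : NestedOrDisjoint S)
    (hmeas : ∀ Q ∈ S, MeasurableSet Q) (μ : Measure α) {E : Set α} (hE : MeasurableSet E)
    (m : ℕ) : ∑ Q ∈ S, μ (E ∩ (Q \ layer S (rank S Q) m Q)) ≤ m * μ E := by
  have hcard (R : Set α) :
      (S.filter fun Q => IsShallowDescendant S m R Q).card * μ (E ∩ EQ S R) ≤
        m * μ (E ∩ EQ S R) := by
    rcases R.eq_empty_or_nonempty with rfl | hR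
    · simp [EQ]
    · gcongr
      exact_mod_cast card_filter_isShallowDescendant_le hS hR m
  calc ∑ Q ∈ S, μ (E ∩ (Q \ layer S (rank S Q) m Q))
      ≤ ∑ Q ∈ S, ∑ R ∈ S.filter fun R => IsShallowDescendant S m R Q, μ (E ∩ EQ S R) := by
        refine Finset.sum_le_sum fun Q hQ =>
          (measure_mono ?_).trans (measure_biUnion_finset_le _ _)
        rw [← inter_iUnion₂]
        exact inter_subset_inter_right E (diff_layer_rank_subset hS hQ)
    _ = ∑ R ∈ S, ∑ Q ∈ S.filter fun Q => IsShallowDescendant S m R Q, μ (E ∩ EQ S R) :=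
        Finset.sum_comm' fun Q R => by simp only [Finset.mem_filter]; tauto
    _ ≤ ∑ R ∈ S, m * μ (E ∩ EQ S R) := by
        refine Finset.sum_le_sum fun R _ => ?_
        rw [Finset.sum_const, nsmul_eq_mul]
        exact hcard R
    _ = m * ∑ R ∈ S, μ (E ∩ EQ S R) := (Finset.mul_sum _ _ _).symm
    _ ≤ m * μ E := by gcongr; exact sum_measure_inter_EQ_le hS hmeas μ hE

end Nested

/-- Stratification lemma (Domingo-Salazar–Lacey–Rey): for a finite nested-or-disjoint
family `𝒮`: the sets `E_Q` are pairwise disjoint;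
`Q \ A_m(Q) = ∪_{l<m} ∪{E_{Q'} : Q' ∈ 𝒮_{ν+l}, Q' ⊆ Q}` for `Q ∈ 𝒮_ν`; and for any
measure `μ` and measurable set `E`, `Σ_{Q∈𝒮} μ(E ∩ (Q \ A_m(Q))) ≤ m·μ(E)`. -/
theorem stmt18 [MeasurableSpace α] (S : Finset (Set α))
    (hmeas : ∀ Q ∈ S, MeasurableSet Q)
    (hnest : ∀ Q ∈ S, ∀ Q' ∈ S, Q ⊆ Q' ∨ Q' ⊆ Q ∨ Disjoint Q Q') :
    ((S : Set (Set α)).Pairwise fun Q Q' => Disjoint (EQ S Q) (EQ S Q')) ∧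
    (∀ (m ν : ℕ), ∀ Q ∈ strat S ν,
      Q \ layer S ν m Q =
        ⋃ l ∈ Finset.range m,
          ⋃ Q' ∈ (strat S (ν + l)).filter fun Q' => Q' ⊆ Q, EQ S Q') ∧
    (∀ (μ : Measure α) (E : Set α), MeasurableSet E → ∀ m : ℕ,
      ∑ Q ∈ S, μ (E ∩ (Q \ layer S (rank S Q) m Q)) ≤ (m : ℝ≥0∞) * μ E) :=
  ⟨pairwise_disjoint_EQ hnest, fun m _ _ hQ => diff_layer_eq_biUnion_EQ hnest m hQ,
    fun μ _ hE m => sum_measure_inter_diff_layer_le hnest hmeas μ hE m⟩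
end
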